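/- If a rule set R is DRPC (deterministic restricted prefix-cyclic), then R never-terminates: some knowledge base with rule set R admits no finite chase tree. -/

import Mathlib

set_option maxHeartbeats 1000000

namespace DisjChase

open scoped Classical
noncomputable section

/-! ### Basic syntax -/

abbrev Var := ℕ
abbrev Pred := ℕ

/-- An atom over a type of terms `T`. -/
structure Atom (T : Type) where
  pred : Pred
  args : List T
deriving DecidableEq

def Atom.map {S T : Type} (f : S → T) (a : Atom S) : Atom T :=
  ⟨a.pred, a.args.map f⟩

/-- A (disjunctive existential) rule: a nonempty body and a nonempty list of
nonempty head conjunctions, all constant- and function-free (atoms over variables). -/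
structure Rule where
  body : List (Atom Var)
  heads : List (List (Atom Var))
  body_ne : body ≠ []
  heads_ne : heads ≠ []
  heads_conj_ne : ∀ h ∈ heads, h ≠ []

def Rule.branching (ρ : Rule) : ℕ := ρ.heads.length

def Rule.bodyVars (ρ : Rule) : List Var := (ρ.body.map Atom.args).flatten

/-- The frontier of a rule: the body variables that also occur in some head disjunct. -/
def Rule.frontierList (ρ : Rule) : List Var :=
  (ρ.bodyVars.filter fun x => ρ.heads.any fun h => h.any fun a => a.args.contains x).dedup

/-- A rule is datalog if it is deterministic and has no existentially quantified variables. -/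
def Rule.Datalog (ρ : Rule) : Prop :=
  ρ.branching = 1 ∧ ∀ h ∈ ρ.heads, ∀ a ∈ h, ∀ x ∈ a.args, x ∈ ρ.bodyVars

/-- A rule is deterministic if it has exactly one head disjunct. -/
def Rule.Deterministic (ρ : Rule) : Prop := ρ.branching = 1

/-- Constants: the special constant `⋆`, ordinary constants, the fresh constants
`c_f` (one for each skolem function symbol `f = f^ρ_{i,y}`), and the fresh constants
`c_x` (one for each variable `x`, used by `σ_uc`). -/
inductive Const where
  | star : Const
  | nat : ℕ → Const
  | skolemConst : Rule → ℕ → Var → Const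
  | varConst : Var → Const

/-- Ground terms: built from constants and the skolem function symbols `f^ρ_{i,y}`. -/
inductive GTerm where
  | const : Const → GTerm
  | func : Rule → ℕ → Var → List GTerm → GTerm

def GTerm.isFunctional : GTerm → Prop
  | .const _ => False
  | .func _ _ _ _ => True

/-- `GTerm.Subterm s t` : `s` is a subterm of `t`. -/
inductive GTerm.Subterm : GTerm → GTerm → Prop
  | refl (t : GTerm) : GTerm.Subterm t t
  | func {u s : GTerm} {args : List GTerm} (ρ : Rule) (i : ℕ) (y : Var) :
      s ∈ args → GTerm.Subterm u s → GTerm.Subterm u (GTerm.func ρ i y args)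

def GTerm.depth : GTerm → ℕ
  | .const _ => 1
  | .func _ _ _ args => 1 + (args.attach.map fun t => GTerm.depth t.1).foldr max 0
termination_by t => sizeOf t
decreasing_by
  have := List.sizeOf_lt_of_mem t.2
  simp only [GTerm.func.sizeOf_spec]
  omega

/-- A term is cyclic if it has a subterm of the form `f(s⃗)` with `f` occurring in `s⃗`. -/
def GTerm.Cyclic (t : GTerm) : Prop :=
  ∃ (ρ : Rule) (i : ℕ) (y : Var) (args : List GTerm),
    GTerm.Subterm (GTerm.func ρ i y args) t ∧
    ∃ s ∈ args, ∃ args' : List GTerm, GTerm.Subterm (GTerm.func ρ i y args') s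

/-- A `ρ`-cyclic term: a term `f(s⃗)` with `f` a function symbol of `sk(ρ)`
occurring also in `s⃗`. -/
def RuleCyclic (ρ : Rule) (t : GTerm) : Prop :=
  ∃ (i : ℕ) (y : Var) (args : List GTerm), t = GTerm.func ρ i y args ∧
    ∃ s ∈ args, ∃ args' : List GTerm, GTerm.Subterm (GTerm.func ρ i y args') s

/-! ### Substitutions, facts, triggers -/

abbrev Subst := Var → GTerm
abbrev Fact := Atom GTerm
abbrev FactSet := Set Fact

/-- The substitution mapping every variable `x` to the fresh constant `c_x`. -/
def sigmaUC : Subst := fun x => GTerm.const (Const.varConst x)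

structure Trigger where
  rule : Rule
  subst : Subst

/-- The skolemizing substitution for disjunct `i`: body variables are mapped by `σ`,
existential variables `y` to the skolem term `f^ρ_{i,y}` applied to the frontier images. -/
def skolemSubst (ρ : Rule) (i : ℕ) (σ : Subst) : Subst := fun y =>
  if y ∈ ρ.bodyVars then σ y
  else GTerm.func ρ i y (ρ.frontierList.map σ)

/-- `out_i(λ) = η_i(sk(ρ))σ` (0-indexed disjuncts). -/
def Trigger.out (lam : Trigger) (i : ℕ) : FactSet :=
  { f | ∃ a ∈ lam.rule.heads.getD i [], f = a.map (skolemSubst lam.rule i lam.subst) }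

def Trigger.outUnion (lam : Trigger) : FactSet :=
  { f | ∃ i < lam.rule.branching, f ∈ lam.out i }

def Trigger.Loaded (lam : Trigger) (F : FactSet) : Prop :=
  ∀ a ∈ lam.rule.body, a.map lam.subst ∈ F

def Trigger.Obsolete (lam : Trigger) (F : FactSet) : Prop :=
  ∃ h ∈ lam.rule.heads, ∃ σ' : Subst,
    (∀ x ∈ lam.rule.bodyVars, σ' x = lam.subst x) ∧ ∀ a ∈ h, a.map σ' ∈ F

/-- A fact set satisfies a rule if all triggers with this rule are not loaded or obsolete. -/
def SatisfiesRule (F : FactSet) (ρ : Rule) : Prop :=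
  ∀ σ : Subst, Trigger.Loaded ⟨ρ, σ⟩ F → Trigger.Obsolete ⟨ρ, σ⟩ F

/-- A ground term is over a rule set if all its function symbols come from
the skolemization of the rule set. -/
inductive GTerm.Over (R : Set Rule) : GTerm → Prop
  | const (c : Const) : GTerm.Over R (GTerm.const c)
  | func {ρ : Rule} {i : ℕ} {y : Var} {args : List GTerm} :
      ρ ∈ R → (∀ t ∈ args, GTerm.Over R t) → GTerm.Over R (GTerm.func ρ i y args)

def RTrigger (R : Set Rule) (lam : Trigger) : Prop :=
  lam.rule ∈ R ∧ ∀ x : Var, (lam.subst x).Over R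

/-- A function-free fact set (i.e., a database). -/
def FunctionFree (F : FactSet) : Prop :=
  ∀ a ∈ F, ∀ t ∈ a.args, ∃ c : Const, t = GTerm.const c

/-! ### Chase trees -/

/-- Iterated edge relation: paths of length `k`. -/
def EPow {V : Type} (E : V → V → Prop) : ℕ → V → V → Prop
  | 0 => Eq
  | n + 1 => fun a c => ∃ b, E a b ∧ EPow E n b c

/-- A chase tree for the knowledge base `⟨R, D⟩` (restricted chase with datalog priority). -/
structure ChaseTree (R : Set Rule) (D : FactSet) where
  V : Type
  E : V → V → Prop
  fl : V → FactSet
  tl : V → Trigger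
  root : V
  reach_root : ∀ v, Relation.ReflTransGen E root v
  no_in_root : ∀ v, ¬ E v root
  parent_unique : ∀ {u w v : V}, E u v → E w v → u = w
  root_label : fl root = D
  expand : ∀ v : V, (∃ c, E v c) →
    ∃ lam : Trigger, RTrigger R lam ∧ lam.Loaded (fl v) ∧ ¬ lam.Obsolete (fl v) ∧
      (¬ lam.rule.Datalog → ∀ ρ ∈ R, ρ.Datalog → SatisfiesRule (fl v) ρ) ∧
      ∃ f : Fin lam.rule.branching → V,
        Function.Injective f ∧ (∀ i, E v (f i)) ∧ (∀ c, E v c → ∃ i, c = f i) ∧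
        ∀ i : Fin lam.rule.branching, fl (f i) = fl v ∪ lam.out i.1 ∧ tl (f i) = lam
  leaf_sat : ∀ v : V, (∀ c, ¬ E v c) → ∀ ρ ∈ R, SatisfiesRule (fl v) ρ
  fairness : ∀ lam : Trigger, RTrigger R lam → ∀ v : V, lam.Loaded (fl v) →
    ∃ k : ℕ, ∀ u : V, EPow E k v u → lam.Obsolete (fl u)

/-- A branch of a chase tree: a maximal path starting at the root. -/
structure Branch {R : Set Rule} {D : FactSet} (T : ChaseTree R D) where
  seq : ℕ → Option T.V
  head : seq 0 = some T.root
  step_some : ∀ n v w, seq n = some v → seq (n + 1) = some w → T.E v w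
  step_max : ∀ n v, seq n = some v → (∃ c, T.E v c) → ∃ w, seq (n + 1) = some w
  step_leaf : ∀ n v, seq n = some v → (∀ c, ¬ T.E v c) → seq (n + 1) = none
  step_none : ∀ n, seq n = none → seq (n + 1) = none

/-- The result of a chase tree: the unions of the fact labels along its branches. -/
def ChaseTree.result {R : Set Rule} {D : FactSet} (T : ChaseTree R D) : Set FactSet :=
  { S | ∃ b : Branch T, S = { f | ∃ n v, b.seq n = some v ∧ f ∈ T.fl v } }

/-- A rule set never-terminates if some knowledge base with this rule set
admits no finite chase tree. -/
def NeverTerminates (R : Set Rule) : Prop :=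
  ∃ D : FactSet, FunctionFree D ∧ ¬ ∃ T : ChaseTree R D, Finite T.V

/-! ### Head-choices and cyclicity sequences -/

/-- A head-choice maps every rule of `R` to one of its (1-indexed) disjuncts. -/
def IsHeadChoice (R : Set Rule) (hc : Rule → ℕ) : Prop :=
  ∀ ρ ∈ R, 1 ≤ hc ρ ∧ hc ρ ≤ ρ.branching

def outHC (hc : Rule → ℕ) (lam : Trigger) : FactSet := lam.out (hc lam.rule - 1)

/-- `b` is the branch `branch(T,hc)` of `T`: every successive label is the parent's
label united with `out_hc` of the applied trigger. -/
def IsHcBranch {R : Set Rule} {D : FactSet} (T : ChaseTree R D) (hc : Rule → ℕ)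
    (b : Branch T) : Prop :=
  ∀ n v w, b.seq n = some v → b.seq (n + 1) = some w →
    T.fl w = T.fl v ∪ outHC hc (T.tl w)

/-- `λ` is g-unblockable for `⟨R,D⟩` and `hc`. -/
def GUnblockable (R : Set Rule) (D : FactSet) (hc : Rule → ℕ) (lam : Trigger) : Prop :=
  ∀ T : ChaseTree R D, ∀ b : Branch T, IsHcBranch T hc b →
    ∀ n v, b.seq n = some v → lam.Loaded (T.fl v) →
      ∃ m u, b.seq m = some u ∧ outHC hc lam ⊆ T.fl u

/-- `F_i(K, hc, Λ)` for a sequence `Λ` of triggers (0-indexed: `Λ k` is applied to `F_k`). -/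
def chaseSeq (D : FactSet) (hc : Rule → ℕ) (Λ : ℕ → Trigger) : ℕ → FactSet
  | 0 => D
  | n + 1 => chaseSeq D hc Λ n ∪ outHC hc (Λ n)

def SeqLoaded (D : FactSet) (hc : Rule → ℕ) (Λ : ℕ → Trigger) : Prop :=
  ∀ n, (Λ n).Loaded (chaseSeq D hc Λ n)

/-- `t` occurs in the fact set `F`. -/
def GTerm.OccursIn (t : GTerm) (F : FactSet) : Prop :=
  ∃ a ∈ F, ∃ s ∈ a.args, t.Subterm s

def SeqGrowing (D : FactSet) (hc : Rule → ℕ) (Λ : ℕ → Trigger) : Prop :=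
  ∀ i, ∃ j, i < j ∧ ∃ t : GTerm,
    t.OccursIn (chaseSeq D hc Λ j) ∧ ¬ t.OccursIn (chaseSeq D hc Λ i)

/-- A cyclicity sequence: an (infinite) sequence of `R`-triggers that is loaded,
growing, and g-unblockable. -/
def CyclicitySequence (R : Set Rule) (D : FactSet) (hc : Rule → ℕ) (Λ : ℕ → Trigger) : Prop :=
  (∀ n, RTrigger R (Λ n)) ∧ SeqLoaded D hc Λ ∧ SeqGrowing D hc Λ ∧
    ∀ n, GUnblockable R D hc (Λ n)

/-! ### Over-approximations and unblockability -/

/-- `F` is an over-approximation of `R` and `hc` before `λ`. -/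
def IsOverApprox (R : Set Rule) (hc : Rule → ℕ) (lam : Trigger) (F : FactSet) : Prop :=
  ∃ h : GTerm → GTerm,
    (∀ x ∈ lam.rule.frontierList, h (lam.subst x) = lam.subst x) ∧
    ∀ D : FactSet, FunctionFree D → ∀ T : ChaseTree R D, ∀ b : Branch T,
      IsHcBranch T hc b → ∀ n u, b.seq n = some u → ¬ outHC hc lam ⊆ T.fl u →
        (Atom.map h) '' (T.fl u) ⊆ F

/-- The substitution mapping the frontier of `ρ` (in order) to the given argument list. -/
def frontierSubst (ρ : Rule) (args : List GTerm) : Subst := fun x =>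
  args.getD (ρ.frontierList.idxOf x) (GTerm.const Const.star)

/-- Birth facts of a term. -/
def GTerm.births : GTerm → FactSet
  | .const _ => ∅
  | .func ρ i _ args =>
      Trigger.out ⟨ρ, frontierSubst ρ args⟩ i ∪
        (args.attach.map fun s => GTerm.births s.1).foldr (· ∪ ·) ∅
termination_by t => sizeOf t
decreasing_by
  have := List.sizeOf_lt_of_mem s.2
  simp only [GTerm.func.sizeOf_spec]
  omega

/-- Birth facts of a trigger. -/
def Trigger.births (lam : Trigger) : FactSet :=
  { f | ∃ x ∈ lam.rule.frontierList, f ∈ GTerm.births (lam.subst x) }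

/-- The term-skeleton of a trigger: the terms occurring in its birth facts together
with the constants in frontier positions. -/
def skel (lam : Trigger) : Set GTerm :=
  { t | ∃ a ∈ lam.births, ∃ s ∈ a.args, t.Subterm s } ∪
  { t | ∃ x ∈ lam.rule.frontierList, lam.subst x = t ∧ ∃ c, t = GTerm.const c }

/-- `h^⋆_λ`. -/
def hstar (lam : Trigger) : GTerm → GTerm := fun t =>
  if t ∈ skel lam then t else GTerm.const Const.star

/-- `h^uc_λ`. -/
def huc (lam : Trigger) : GTerm → GTerm := fun t =>
  if t ∈ skel lam then t
  else
    match t with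
    | GTerm.func ρ i y _ => GTerm.const (Const.skolemConst ρ i y)
    | GTerm.const (Const.skolemConst ρ i y) => GTerm.const (Const.skolemConst ρ i y)
    | _ => GTerm.const Const.star

def hImg (h : GTerm → GTerm) (F : FactSet) : FactSet := (Atom.map h) '' F

def predsOf (R : Set Rule) : Set Pred :=
  { p | ∃ ρ ∈ R, (∃ a ∈ ρ.body, a.pred = p) ∨ ∃ h ∈ ρ.heads, ∃ a ∈ h, a.pred = p }

def skelConsts (lam : Trigger) : Set Const :=
  { c | ∃ t ∈ skel lam, GTerm.Subterm (GTerm.const c) t }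

/-- All facts over a predicate of `R` and constants from `skel(λ) ∪ {⋆}`. -/
def baseFacts (R : Set Rule) (lam : Trigger) : FactSet :=
  { a | a.pred ∈ predsOf R ∧
    ∀ t ∈ a.args, ∃ c : Const, t = GTerm.const c ∧ (c ∈ skelConsts lam ∨ c = Const.star) }

def Oclosed (R : Set Rule) (hc : Rule → ℕ) (lam : Trigger) (h : GTerm → GTerm)
    (F : FactSet) : Prop :=
  baseFacts R lam ⊆ F ∧ lam.births ⊆ F ∧
  ∀ lam' : Trigger, RTrigger R lam' → lam'.Loaded F → outHC hc lam' ≠ outHC hc lam →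
    hImg h (outHC hc lam') ⊆ F

/-- `O(R, hc, λ, h)`. -/
def Oset (R : Set Rule) (hc : Rule → ℕ) (lam : Trigger) (h : GTerm → GTerm) : FactSet :=
  ⋂₀ { F | Oclosed R hc lam h F }

def OclosedND (R : Set Rule) (lam : Trigger) (h : GTerm → GTerm) (F : FactSet) : Prop :=
  baseFacts R lam ⊆ F ∧ lam.births ⊆ F ∧
  ∀ lam' : Trigger, RTrigger R lam' → lam'.Loaded F →
    (lam'.rule = lam.rule → ∃ i < lam.rule.branching, lam'.out i ≠ lam.out i) →
    hImg h lam'.outUnion ⊆ F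

/-- `O(R, λ, h)`. -/
def OsetND (R : Set Rule) (lam : Trigger) (h : GTerm → GTerm) : FactSet :=
  ⋂₀ { F | OclosedND R lam h F }

/-- `λ` is `⋆`-unblockable for `R`. -/
def StarUnblockable (R : Set Rule) (lam : Trigger) : Prop :=
  lam.rule.Datalog ∨ ¬ lam.Obsolete (OsetND R lam (hstar lam))

/-- `λ` is `uc`-unblockable for `R` and `hc`. -/
def UcUnblockable (R : Set Rule) (hc : Rule → ℕ) (lam : Trigger) : Prop :=
  lam.rule.Datalog ∨ ¬ lam.Obsolete (Oset R hc lam (huc lam))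

/-! ### Constant mappings and reversibility -/

abbrev CMap := Const → Option GTerm

/-- Apply a constant mapping to a ground term, replacing constants in its domain. -/
def applyCM (g : CMap) : GTerm → GTerm
  | .const c => (g c).getD (GTerm.const c)
  | .func ρ i y args => GTerm.func ρ i y (args.attach.map fun s => applyCM g s.1)
termination_by t => sizeOf t
decreasing_by
  have := List.sizeOf_lt_of_mem s.2
  simp only [GTerm.func.sizeOf_spec]
  omega

/-- `g` is reversible for the (subterm-closed) set of terms `𝒯`. -/
def Reversible (g : CMap) (𝒯 : Set GTerm) : Prop :=
  (∀ c : Const, GTerm.const c ∈ 𝒯 → (g c).isSome) ∧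
  (∀ t ∈ 𝒯, ∀ s ∈ 𝒯, t ≠ s → applyCM g t ≠ applyCM g s) ∧
  (∀ c : Const, GTerm.const c ∈ 𝒯 →
    ∀ s : GTerm, s.Subterm (applyCM g (GTerm.const c)) →
      ∀ u ∈ 𝒯, u.isFunctional → applyCM g u ≠ s)

def cmImg (g : CMap) (F : FactSet) : FactSet := (Atom.map (applyCM g)) '' F

/-! ### Cyclicity prefixes -/

/-- The rule-database `D_ρ = body(ρ)σ_uc`. -/
def ruleDB (ρ : Rule) : FactSet := { f | ∃ a ∈ ρ.body, f = a.map sigmaUC }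

/-- A cyclicity prefix for `R`, `hc`, and `ρ ∈ R`. -/
structure CyclicityPrefix (R : Set Rule) (hc : Rule → ℕ) (ρ : Rule) where
  n : ℕ
  npos : 0 < n
  trig : ℕ → Trigger
  g : CMap
  rtrig : ∀ i ≤ n, RTrigger R (trig i)
  first_rule : (trig 0).rule = ρ
  first_subst : (trig 0).subst = sigmaUC
  loaded : ∀ i ≤ n, (trig i).Loaded (chaseSeq (ruleDB ρ) hc trig i)
  uc_unbl : ∀ i, 1 ≤ i → i ≤ n → UcUnblockable R hc (trig i)
  g_unbl : GUnblockable R (ruleDB ρ) hc (trig 0)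
  last_rule : (trig n).rule = ρ
  last_cyclic : ∃ t : GTerm, RuleCyclic ρ t ∧ t.OccursIn (outHC hc (trig n))
  g_comp : applyCM g ∘ (trig 0).subst = (trig n).subst
  g_rev : ∀ i, 1 ≤ i → i ≤ n → ∀ j : ℕ,
    Reversible g (skel ⟨(trig i).rule, (applyCM g)^[j] ∘ (trig i).subst⟩)

/-- The infinite sequence `Λ^∞` obtained by unfolding a cyclicity prefix. -/
def prefixInf {R : Set Rule} {hc : Rule → ℕ} {ρ : Rule} (P : CyclicityPrefix R hc ρ) :
    ℕ → Trigger := fun k =>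
  if k = 0 then P.trig 0
  else ⟨(P.trig ((k - 1) % P.n + 1)).rule,
        (applyCM P.g)^[(k - 1) / P.n] ∘ (P.trig ((k - 1) % P.n + 1)).subst⟩

/-! ### RPC, RPC_s, DRPC -/

def RPCclosed (R : Set Rule) (hc : Rule → ℕ) (ρ : Rule) (F : FactSet) : Prop :=
  ruleDB ρ ⊆ F ∧ outHC hc ⟨ρ, sigmaUC⟩ ⊆ F ∧
  ∀ lam : Trigger, RTrigger R lam →
    (∀ x ∈ lam.rule.bodyVars, ¬ (lam.subst x).Cyclic) →
    lam.Loaded F → UcUnblockable R hc lam →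
    (lam.rule = ρ → Set.InjOn lam.subst { x | x ∈ lam.rule.bodyVars }) →
    outHC hc lam ⊆ F

/-- `RPC(R, hc, ρ)`. -/
def RPCset (R : Set Rule) (hc : Rule → ℕ) (ρ : Rule) : FactSet :=
  ⋂₀ { F | RPCclosed R hc ρ F }

/-- `R` is restricted prefix-cyclic. -/
def IsRPC (R : Set Rule) : Prop :=
  ∃ hc : Rule → ℕ, IsHeadChoice R hc ∧
    ∃ ρ ∈ R, ∃ t : GTerm, RuleCyclic ρ t ∧ t.OccursIn (RPCset R hc ρ)

/-- The head-choice `hc_i`. -/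
def hcIdx (i : ℕ) : Rule → ℕ := fun ρ => if i ≤ ρ.branching then i else ρ.branching

/-- `branching(R)`: the least bound on the branching of the rules of `R`. -/
def branchingR (R : Set Rule) : ℕ := sInf { b | ∀ ρ ∈ R, ρ.branching ≤ b }

/-- `R` is `RPC_s`. -/
def IsRPCs (R : Set Rule) : Prop :=
  ∃ i : ℕ, 1 ≤ i ∧ i ≤ branchingR R ∧
    ∃ ρ ∈ R, ∃ t : GTerm, RuleCyclic ρ t ∧ t.OccursIn (RPCset R (hcIdx i) ρ)

def DRPCclosed (R : Set Rule) (ρ : Rule) (F : FactSet) : Prop :=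
  ruleDB ρ ⊆ F ∧ Trigger.out ⟨ρ, sigmaUC⟩ 0 ⊆ F ∧
  ∀ lam : Trigger, RTrigger R lam → lam.rule.Deterministic →
    (∀ x ∈ lam.rule.bodyVars, ¬ (lam.subst x).Cyclic) →
    lam.Loaded F → StarUnblockable R lam →
    (lam.rule = ρ → Set.InjOn lam.subst { x | x ∈ lam.rule.bodyVars }) →
    lam.out 0 ⊆ F

/-- `DRPC(R, ρ)`. -/
def DRPCset (R : Set Rule) (ρ : Rule) : FactSet :=
  ⋂₀ { F | DRPCclosed R ρ F }

/-- `R` is deterministic restricted prefix-cyclic. -/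
def IsDRPC (R : Set Rule) : Prop :=
  ∃ ρ ∈ R, ρ.Deterministic ∧ ∃ t : GTerm, RuleCyclic ρ t ∧ t.OccursIn (DRPCset R ρ)


/-! ### Auxiliary development for the main theorem -/

section Aux

/-- Subterm is transitive. -/
lemma GTerm.Subterm.trans' {u s t : GTerm} (h1 : GTerm.Subterm u s)
    (h2 : GTerm.Subterm s t) : GTerm.Subterm u t := by
  induction h2 with
  | refl => exact h1
  | func ρ i y hmem hsub ih => exact GTerm.Subterm.func ρ i y hmem ih

lemma GTerm.Subterm.eq_of_const {t : GTerm} {c : Const}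
    (h : GTerm.Subterm t (GTerm.const c)) : t = GTerm.const c := by
  cases h; rfl

lemma GTerm.Subterm.of_func {u : GTerm} {ρ : Rule} {i : ℕ} {y : Var} {args : List GTerm}
    (h : GTerm.Subterm u (GTerm.func ρ i y args)) :
    u = GTerm.func ρ i y args ∨ ∃ s ∈ args, GTerm.Subterm u s := by
  cases h with
  | refl => exact Or.inl rfl
  | func _ _ _ hmem hsub => exact Or.inr ⟨_, hmem, hsub⟩

lemma mem_foldr_union {α : Type} {x : α} :
    ∀ (l : List (Set α)), x ∈ (l.foldr (· ∪ ·) ∅) ↔ ∃ S ∈ l, x ∈ S := by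
  intro l
  induction l with
  | nil => simp
  | cons S l ih => simp [ih]

lemma le_foldr_max {x : ℕ} : ∀ (l : List ℕ), x ∈ l → x ≤ l.foldr max 0 := by
  intro l
  induction l with
  | nil => simp
  | cons a l ih =>
    intro h
    rcases List.mem_cons.1 h with rfl | h
    · exact le_max_left _ _
    · exact le_trans (ih h) (le_max_right _ _)

lemma Atom.map_map {S T U : Type} (f : T → U) (g : S → T) (a : Atom S) :
    Atom.map f (Atom.map g a) = Atom.map (fun x => f (g x)) a := by
  simp [Atom.map, List.map_map, Function.comp]

lemma Rule.ext' {r s : Rule} (h1 : r.body = s.body) (h2 : r.heads = s.heads) : r = s := by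
  cases r; cases s
  cases h1; cases h2
  rfl

/-! #### Encoding of ground terms into naturals -/

def encAtomN (a : Atom ℕ) : ℕ := Nat.pair a.pred (Encodable.encode a.args)

lemma encAtomN_inj : Function.Injective encAtomN := by
  intro a b h
  unfold encAtomN at h
  have h1 := congrArg (fun n => n.unpair.1) h
  have h2 := congrArg (fun n => n.unpair.2) h
  simp [Nat.unpair_pair] at h1 h2
  cases a; cases b
  simp_all [Encodable.encode_injective.eq_iff]

def encRule (ρ : Rule) : ℕ :=
  Nat.pair (Encodable.encode (ρ.body.map encAtomN))
    (Encodable.encode (ρ.heads.map (fun h => Encodable.encode (h.map encAtomN))))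

lemma encRule_inj : Function.Injective encRule := by
  intro r s h
  unfold encRule at h
  have h1 := congrArg (fun n => n.unpair.1) h
  have h2 := congrArg (fun n => n.unpair.2) h
  simp only [Nat.unpair_pair] at h1 h2
  have hb := Encodable.encode_injective h1
  have hh := Encodable.encode_injective h2
  have hb' := List.map_injective_iff.2 encAtomN_inj hb
  have hh' := List.map_injective_iff.2
    (fun x y hxy => List.map_injective_iff.2 encAtomN_inj (Encodable.encode_injective hxy)) hh
  exact Rule.ext' hb' hh'

def encConst : Const → ℕ
  | Const.star => Nat.pair 0 0
  | Const.nat n => Nat.pair 1 n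
  | Const.skolemConst ρ i y => Nat.pair 2 (Nat.pair (encRule ρ) (Nat.pair i y))
  | Const.varConst x => Nat.pair 3 x

lemma pair_inj {a b c d : ℕ} (h : Nat.pair a b = Nat.pair c d) : a = c ∧ b = d := by
  have := congrArg Nat.unpair h
  simp [Nat.unpair_pair] at this
  exact this

lemma encConst_inj : Function.Injective encConst := by
  intro a b h
  cases a <;> cases b <;>
    simp only [encConst, Nat.pair_eq_pair] at h <;> simp_all
  exact encRule_inj h.1

def gcode : GTerm → ℕ
  | .const c => Nat.pair 0 (encConst c)
  | .func ρ i y args =>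
      Nat.pair 1 (Nat.pair (encRule ρ) (Nat.pair i (Nat.pair y
        (Encodable.encode (args.attach.map fun s => gcode s.1)))))
termination_by t => sizeOf t
decreasing_by
  have := List.sizeOf_lt_of_mem s.2
  simp only [GTerm.func.sizeOf_spec]
  omega

lemma gcode_const (c : Const) : gcode (GTerm.const c) = Nat.pair 0 (encConst c) := by
  simp [gcode]

lemma gcode_func (ρ : Rule) (i : ℕ) (y : Var) (args : List GTerm) :
    gcode (GTerm.func ρ i y args) =
      Nat.pair 1 (Nat.pair (encRule ρ) (Nat.pair i (Nat.pair y
        (Encodable.encode (args.map gcode))))) := by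
  rw [gcode]
  congr 1
  rw [List.attach_map_val]

lemma gcode_inj_aux : ∀ (n : ℕ) (t s : GTerm), sizeOf t ≤ n → gcode t = gcode s → t = s := by
  intro n
  induction n with
  | zero =>
    intro t s h
    exfalso
    cases t <;> simp at h <;> omega
  | succ n ih =>
    intro t s hsz h
    cases t with
    | const c =>
      cases s with
      | const d =>
        rw [gcode_const, gcode_const] at h
        rw [encConst_inj (pair_inj h).2]
      | func ρ i y args =>
        rw [gcode_const, gcode_func] at h
        exact absurd (pair_inj h).1 (by decide)
    | func ρ i y args =>
      cases s with
      | const d =>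
        rw [gcode_func, gcode_const] at h
        exact absurd (pair_inj h).1 (by decide)
      | func ρ' i' y' args' =>
        rw [gcode_func, gcode_func] at h
        rcases pair_inj h with ⟨-, h⟩
        rcases pair_inj h with ⟨h1, h⟩
        rcases pair_inj h with ⟨h2, h⟩
        rcases pair_inj h with ⟨h3, h4⟩
        have hargs : args.map gcode = args'.map gcode := Encodable.encode_injective h4
        have hsz' : ∀ x ∈ args, sizeOf x ≤ n := by
          intro x hx
          have := List.sizeOf_lt_of_mem hx
          simp only [GTerm.func.sizeOf_spec] at hsz
          omega
        have hlist : ∀ l1 : List GTerm, (∀ x ∈ l1, sizeOf x ≤ n) →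
            ∀ l2 : List GTerm, l1.map gcode = l2.map gcode → l1 = l2 := by
          intro l1
          induction l1 with
          | nil =>
            intro _ l2 hl
            cases l2 <;> simp_all
          | cons a l ihl =>
            intro hb l2 hl
            cases l2 with
            | nil => simp_all
            | cons b l' =>
              simp only [List.map_cons, List.cons.injEq] at hl
              refine List.cons_eq_cons.2 ⟨?_, ?_⟩
              · exact ih a b (hb a (by simp)) hl.1
              · exact ihl (fun x hx => hb x (by simp [hx])) l' hl.2
        have : args = args' := hlist args hsz' args' hargs
        subst this
        rw [encRule_inj h1, h2, h3]

lemma gcode_inj : Function.Injective gcode := fun t s h =>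
  gcode_inj_aux (sizeOf t) t s le_rfl h

end Aux

section Terms

/-! #### Well-formed terms and good fact sets -/

/-- A functional term is well-formed if its skolem symbol's variable is existential,
occurs in the corresponding head disjunct, and its arguments are frontier images. -/
def WFat (t : GTerm) : Prop :=
  ∀ ψ i y args, t = GTerm.func ψ i y args →
    y ∉ ψ.bodyVars ∧ (∃ a ∈ ψ.heads.getD i [], y ∈ a.args) ∧
      ∃ σ : Subst, args = ψ.frontierList.map σ

def GoodT (R : Set Rule) (t : GTerm) : Prop :=
  ∀ s, GTerm.Subterm s t → GTerm.Over R s ∧ s ≠ GTerm.const Const.star ∧ WFat s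

def GoodF (R : Set Rule) (F : FactSet) : Prop :=
  ∀ a ∈ F, a.pred ∈ predsOf R ∧ ∀ s ∈ a.args, GoodT R s

lemma GoodT.subterm {R : Set Rule} {t s : GTerm} (h : GoodT R t)
    (hs : GTerm.Subterm s t) : GoodT R s :=
  fun u hu => h u (hu.trans' hs)

lemma GoodT.const {R : Set Rule} {c : Const} (h : c ≠ Const.star) :
    GoodT R (GTerm.const c) := by
  intro s hs
  rw [hs.eq_of_const]
  refine ⟨GTerm.Over.const c, by simpa using h, ?_⟩
  intro ψ i y args h'
  cases h'

lemma GTerm.Over.of_func {R : Set Rule} {ψ : Rule} {i : ℕ} {y : Var} {args : List GTerm}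
    (h : GTerm.Over R (GTerm.func ψ i y args)) : ψ ∈ R ∧ ∀ t ∈ args, GTerm.Over R t := by
  cases h with
  | func h1 h2 => exact ⟨h1, h2⟩

/-! #### Frontier lemmas -/

lemma mem_bodyVars_iff {ρ : Rule} {x : Var} :
    x ∈ ρ.bodyVars ↔ ∃ b ∈ ρ.body, x ∈ b.args := by
  simp only [Rule.bodyVars, List.mem_flatten, List.mem_map]
  constructor
  · rintro ⟨l, ⟨b, hb, rfl⟩, hx⟩
    exact ⟨b, hb, hx⟩
  · rintro ⟨b, hb, hx⟩
    exact ⟨b.args, ⟨b, hb, rfl⟩, hx⟩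

lemma frontier_sub_bodyVars {ρ : Rule} {x : Var} (h : x ∈ ρ.frontierList) :
    x ∈ ρ.bodyVars := by
  have := List.mem_dedup.1 h
  exact (List.mem_filter.1 this).1

lemma mem_frontier_of {ρ : Rule} {x : Var} (hx : x ∈ ρ.bodyVars)
    {h : List (Atom Var)} (hh : h ∈ ρ.heads) {a : Atom Var} (ha : a ∈ h)
    (hxa : x ∈ a.args) : x ∈ ρ.frontierList := by
  rw [Rule.frontierList, List.mem_dedup, List.mem_filter]
  refine ⟨hx, ?_⟩
  rw [List.any_eq_true]
  refine ⟨h, hh, ?_⟩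
  rw [List.any_eq_true]
  exact ⟨a, ha, by simpa using hxa⟩

lemma getD_mem_or_nil (l : List (List (Atom Var))) (i : ℕ) :
    l.getD i [] = [] ∨ l.getD i [] ∈ l := by
  by_cases h : i < l.length
  · right
    rw [List.getD_eq_getElem _ _ h]
    exact List.getElem_mem h
  · left
    rw [List.getD_eq_default _ _ (by omega)]

lemma det_head_eq {ρ : Rule} (hdet : ρ.Deterministic) {h : List (Atom Var)}
    (hh : h ∈ ρ.heads) : h = ρ.heads.getD 0 [] := by
  rcases List.length_eq_one_iff.1 hdet with ⟨h0, he⟩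
  rw [he] at hh ⊢
  simpa using hh

lemma det_frontier_head0 {ρ : Rule} (hdet : ρ.Deterministic) {x : Var}
    (hx : x ∈ ρ.frontierList) : ∃ a ∈ ρ.heads.getD 0 [], x ∈ a.args := by
  have := (List.mem_filter.1 (List.mem_dedup.1 hx)).2
  rw [List.any_eq_true] at this
  rcases this with ⟨h, hh, h2⟩
  rw [List.any_eq_true] at h2
  rcases h2 with ⟨a, ha, hxa⟩
  exact ⟨a, by rwa [det_head_eq hdet hh] at ha, by simpa using hxa⟩

lemma head_var_mem_frontier {ρ : Rule} {i : ℕ} {a : Atom Var} {v : Var}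
    (ha : a ∈ ρ.heads.getD i []) (hv : v ∈ a.args) (hvb : v ∈ ρ.bodyVars) :
    v ∈ ρ.frontierList := by
  rcases getD_mem_or_nil ρ.heads i with h | h
  · rw [h] at ha; cases ha
  · exact mem_frontier_of hvb h ha hv

lemma skolemSubst_of_mem {ρ : Rule} {i : ℕ} {σ : Subst} {v : Var}
    (h : v ∈ ρ.bodyVars) : skolemSubst ρ i σ v = σ v := if_pos h

lemma skolemSubst_of_not_mem {ρ : Rule} {i : ℕ} {σ : Subst} {v : Var}
    (h : v ∉ ρ.bodyVars) :
    skolemSubst ρ i σ v = GTerm.func ρ i v (ρ.frontierList.map σ) := if_neg h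

lemma mem_out_iff {ψ : Rule} {τ : Subst} {i : ℕ} {f : Fact} :
    f ∈ Trigger.out ⟨ψ, τ⟩ i ↔
      ∃ a ∈ ψ.heads.getD i [], f = a.map (skolemSubst ψ i τ) := Iff.rfl

lemma out_congr_frontier {ψ : Rule} {σ σ' : Subst}
    (h : ∀ x ∈ ψ.frontierList, σ x = σ' x) (i : ℕ) :
    Trigger.out ⟨ψ, σ⟩ i = Trigger.out ⟨ψ, σ'⟩ i := by
  have key : ∀ a ∈ ψ.heads.getD i [],
      a.map (skolemSubst ψ i σ) = a.map (skolemSubst ψ i σ') := by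
    intro a ha
    unfold Atom.map
    congr 1
    apply List.map_congr_left
    intro v hv
    by_cases hb : v ∈ ψ.bodyVars
    · rw [skolemSubst_of_mem hb, skolemSubst_of_mem hb]
      exact h v (head_var_mem_frontier ha hv hb)
    · rw [skolemSubst_of_not_mem hb, skolemSubst_of_not_mem hb]
      congr 1
      exact List.map_congr_left h
  ext f
  rw [mem_out_iff, mem_out_iff]
  constructor
  · rintro ⟨a, ha, rfl⟩; exact ⟨a, ha, key a ha⟩
  · rintro ⟨a, ha, rfl⟩; exact ⟨a, ha, (key a ha).symm⟩

lemma frontierSubst_map (ψ : Rule) (σ : Subst) {x : Var} (hx : x ∈ ψ.frontierList) :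
    frontierSubst ψ (ψ.frontierList.map σ) x = σ x := by
  unfold frontierSubst
  have hlt : ψ.frontierList.idxOf x < ψ.frontierList.length :=
    List.idxOf_lt_length_iff.2 hx
  rw [List.getD_eq_getElem _ _ (by simpa using hlt)]
  rw [List.getElem_map]
  congr 1
  exact List.getElem_idxOf hlt

lemma out_good {R : Set Rule} {ψ : Rule} (hψ : ψ ∈ R) {τ : Subst}
    (hv : ∀ v ∈ ψ.frontierList, GoodT R (τ v)) (i : ℕ) :
    GoodF R (Trigger.out ⟨ψ, τ⟩ i) := by
  rintro f ⟨a, ha, rfl⟩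
  have hamem : a ∈ ψ.heads.getD i [] := ha
  have hheads : ψ.heads.getD i [] ∈ ψ.heads := by
    rcases getD_mem_or_nil ψ.heads i with h | h
    · rw [h] at hamem; cases hamem
    · exact h
  constructor
  · exact ⟨ψ, hψ, Or.inr ⟨_, hheads, a, hamem, rfl⟩⟩
  · intro s hs
    rw [Atom.map] at hs
    rcases List.mem_map.1 hs with ⟨v, hv', rfl⟩
    by_cases hb : v ∈ ψ.bodyVars
    · rw [skolemSubst_of_mem hb]
      exact hv v (head_var_mem_frontier hamem hv' hb)
    · rw [skolemSubst_of_not_mem hb]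
      intro s hsub
      rcases hsub.of_func with rfl | ⟨u, hu, hsu⟩
      · refine ⟨?_, by simp, ?_⟩
        · refine GTerm.Over.func hψ ?_
          intro t ht
          rcases List.mem_map.1 ht with ⟨x, hx, rfl⟩
          exact (hv x hx _ (GTerm.Subterm.refl _)).1
        · intro ψ' i' y' args' heq
          rw [GTerm.func.injEq] at heq
          obtain ⟨rfl, rfl, rfl, rfl⟩ := heq
          exact ⟨hb, ⟨a, hamem, hv'⟩, τ, rfl⟩
      · rcases List.mem_map.1 hu with ⟨x, hx, rfl⟩
        exact hv x hx s hsu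

lemma mem_births_func {f : Fact} {ρ : Rule} {i : ℕ} {y : Var} {args : List GTerm} :
    f ∈ GTerm.births (GTerm.func ρ i y args) ↔
      f ∈ Trigger.out ⟨ρ, frontierSubst ρ args⟩ i ∨ ∃ s ∈ args, f ∈ GTerm.births s := by
  rw [GTerm.births]
  simp only [Set.mem_union]
  rw [mem_foldr_union]
  simp [List.mem_map, List.mem_attach]

lemma births_const {c : Const} : GTerm.births (GTerm.const c) = ∅ := by
  rw [GTerm.births]

lemma births_good {R : Set Rule} :
    ∀ (n : ℕ) (t : GTerm), sizeOf t ≤ n → GoodT R t → GoodF R (GTerm.births t) := by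
  intro n
  induction n with
  | zero =>
    intro t h
    exfalso
    cases t <;> simp at h
  | succ n ih =>
    intro t hsz hg
    cases t with
    | const c => rw [births_const]; intro a ha; cases ha
    | func ψ i y args =>
      intro f hf
      rcases mem_births_func.1 hf with hf | ⟨s, hs, hf⟩
      · rcases (hg _ (GTerm.Subterm.refl _)).2.2 ψ i y args rfl with ⟨hy, hocc, σ, rfl⟩
        have hψ : ψ ∈ R := ((hg _ (GTerm.Subterm.refl _)).1.of_func).1
        refine out_good hψ ?_ i f hf
        intro v hvfr
        rw [frontierSubst_map ψ σ hvfr]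
        refine hg.subterm ?_
        exact GTerm.Subterm.func ψ i y (List.mem_map_of_mem (f := σ) hvfr) (GTerm.Subterm.refl _)
      · refine ih s ?_ (hg.subterm ?_) f hf
        · have := List.sizeOf_lt_of_mem hs
          simp only [GTerm.func.sizeOf_spec] at hsz
          omega
        · exact GTerm.Subterm.func ψ i y hs (GTerm.Subterm.refl _)

lemma births_self {R : Set Rule} {ψ : Rule} {i : ℕ} {y : Var} {args : List GTerm}
    (h : GoodT R (GTerm.func ψ i y args)) :
    ∃ a ∈ GTerm.births (GTerm.func ψ i y args), ∃ s ∈ a.args,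
      (GTerm.func ψ i y args).Subterm s := by
  rcases (h _ (GTerm.Subterm.refl _)).2.2 ψ i y args rfl with ⟨hy, ⟨a0, ha0, hya0⟩, σ, hargs⟩
  have hmapeq : ψ.frontierList.map (frontierSubst ψ args) = args := by
    rw [hargs]
    apply List.map_congr_left
    intro x hx
    exact frontierSubst_map ψ σ hx
  refine ⟨a0.map (skolemSubst ψ i (frontierSubst ψ args)), ?_, ?_⟩
  · exact mem_births_func.2 (Or.inl ⟨a0, ha0, rfl⟩)
  · refine ⟨skolemSubst ψ i (frontierSubst ψ args) y, ?_, ?_⟩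
    · exact List.mem_map_of_mem hya0
    · rw [skolemSubst_of_not_mem hy, hmapeq]
      exact GTerm.Subterm.refl _

end Terms

section Skel

variable {R : Set Rule} {lam : Trigger}

/-- Goodness of the frontier values of a trigger. -/
def FrGood (R : Set Rule) (lam : Trigger) : Prop :=
  ∀ x ∈ lam.rule.frontierList, GoodT R (lam.subst x)

lemma births_lam_good (hfr : FrGood R lam) : GoodF R lam.births := by
  rintro f ⟨x, hx, hf⟩
  exact births_good (sizeOf (lam.subst x)) _ le_rfl (hfr x hx) f hf

lemma skel_good (hfr : FrGood R lam) {t : GTerm} (ht : t ∈ skel lam) : GoodT R t := by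
  rcases ht with ⟨a, ha, s, hs, hsub⟩ | ⟨x, hx, heq, c, rfl⟩
  · exact ((births_lam_good hfr a ha).2 s hs).subterm hsub
  · exact (hfr x hx).subterm (heq ▸ GTerm.Subterm.refl _)

lemma skel_closed {t s : GTerm} (ht : t ∈ skel lam) (hs : GTerm.Subterm s t) :
    s ∈ skel lam := by
  rcases ht with ⟨a, ha, u, hu, hsub⟩ | ⟨x, hx, heq, c, hc⟩
  · exact Or.inl ⟨a, ha, u, hu, hs.trans' hsub⟩
  · subst hc
    rw [hs.eq_of_const]
    exact Or.inr ⟨x, hx, heq, c, rfl⟩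

lemma frontier_val_in_skel (hfr : FrGood R lam) {x : Var}
    (hx : x ∈ lam.rule.frontierList) : lam.subst x ∈ skel lam := by
  cases heq : lam.subst x with
  | const c => exact Or.inr ⟨x, hx, heq, c, rfl⟩
  | func ψ i y args =>
    have hg : GoodT R (GTerm.func ψ i y args) := heq ▸ hfr x hx
    rcases births_self hg with ⟨a, ha, s, hs, hsub⟩
    refine Or.inl ⟨a, ⟨x, hx, ?_⟩, s, hs, heq ▸ hsub⟩
    rw [heq]; exact ha

lemma hstar_of_mem {t : GTerm} (h : t ∈ skel lam) : hstar lam t = t := if_pos h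

lemma hstar_of_not_mem {t : GTerm} (h : t ∉ skel lam) :
    hstar lam t = GTerm.const Const.star := if_neg h

lemma hstar_star : hstar lam (GTerm.const Const.star) = GTerm.const Const.star := by
  by_cases h : GTerm.const Const.star ∈ skel lam
  · exact hstar_of_mem h
  · exact hstar_of_not_mem h

lemma hstar_idem (t : GTerm) : hstar lam (hstar lam t) = hstar lam t := by
  by_cases h : t ∈ skel lam
  · rw [hstar_of_mem h, hstar_of_mem h]
  · rw [hstar_of_not_mem h, hstar_star]

lemma hstar_over {t : GTerm} (h : GTerm.Over R t) : GTerm.Over R (hstar lam t) := by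
  by_cases hm : t ∈ skel lam
  · rwa [hstar_of_mem hm]
  · rw [hstar_of_not_mem hm]; exact GTerm.Over.const _

/-- The key commutation: collapsing a skolemized value equals collapsing the
skolemization of the collapsed substitution. -/
lemma hstar_skolem (hfr : FrGood R lam) (ψ : Rule) (i : ℕ) (τ : Subst) (v : Var) :
    hstar lam (skolemSubst ψ i τ v) =
      hstar lam (skolemSubst ψ i (fun x => hstar lam (τ x)) v) := by
  by_cases hb : v ∈ ψ.bodyVars
  · rw [skolemSubst_of_mem hb, skolemSubst_of_mem hb, hstar_idem]
  · rw [skolemSubst_of_not_mem hb, skolemSubst_of_not_mem hb]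
    by_cases hu : GTerm.func ψ i v (ψ.frontierList.map τ) ∈ skel lam
    · have hall : ∀ x ∈ ψ.frontierList, τ x ∈ skel lam := by
        intro x hx
        refine skel_closed hu ?_
        exact GTerm.Subterm.func ψ i v (List.mem_map_of_mem (f := τ) hx) (GTerm.Subterm.refl _)
      have : ψ.frontierList.map (fun x => hstar lam (τ x)) = ψ.frontierList.map τ :=
        List.map_congr_left (fun x hx => hstar_of_mem (hall x hx))
      rw [this]
    · rw [hstar_of_not_mem hu]
      by_cases hall : ∀ x ∈ ψ.frontierList, τ x ∈ skel lam
      · have : ψ.frontierList.map (fun x => hstar lam (τ x)) = ψ.frontierList.map τ :=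
          List.map_congr_left (fun x hx => hstar_of_mem (hall x hx))
        rw [this, hstar_of_not_mem hu]
      · push_neg at hall
        rcases hall with ⟨x, hx, hns⟩
        have hstarmem : GTerm.const Const.star ∈
            ψ.frontierList.map (fun x => hstar lam (τ x)) := by
          rw [← hstar_of_not_mem hns]
          exact List.mem_map_of_mem hx
        have hnotskel :
            GTerm.func ψ i v (ψ.frontierList.map (fun x => hstar lam (τ x))) ∉ skel lam := by
          intro hmem
          have hgood := skel_good hfr hmem
          have := (hgood (GTerm.const Const.star)
            (GTerm.Subterm.func ψ i v hstarmem (GTerm.Subterm.refl _))).2.1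
          exact this rfl
        rw [hstar_of_not_mem hnotskel]

/-- Facts in outputs of triggers with good frontier values are star-free. -/
lemma star_free_out {ψ : Rule} {τ : Subst} (hv : ∀ x ∈ ψ.frontierList, GoodT R (τ x))
    {i : ℕ} {f : Fact} (hf : f ∈ Trigger.out ⟨ψ, τ⟩ i) :
    ∀ s ∈ f.args, ¬ (GTerm.const Const.star).Subterm s := by
  rcases hf with ⟨a, ha, rfl⟩
  intro s hs hsub
  rcases List.mem_map.1 hs with ⟨v, hv', rfl⟩
  by_cases hb : v ∈ ψ.bodyVars
  · rw [skolemSubst_of_mem hb] at hsub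
    exact ((hv v (head_var_mem_frontier ha hv' hb)) _ hsub).2.1 rfl
  · rw [skolemSubst_of_not_mem hb] at hsub
    rcases hsub.of_func with heq | ⟨u, hu, hsu⟩
    · cases heq
    · rcases List.mem_map.1 hu with ⟨x, hx, rfl⟩
      exact ((hv x hx) _ hsu).2.1 rfl

end Skel

section Closure

variable {R : Set Rule} {ρ : Rule}

/-- Triggers eligible for the deterministic closure. -/
def elig (R : Set Rule) (ρ : Rule) (lam : Trigger) : Prop :=
  RTrigger R lam ∧ lam.rule.Deterministic ∧
    (∀ x ∈ lam.rule.bodyVars, ¬ (lam.subst x).Cyclic) ∧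
    StarUnblockable R lam ∧
    (lam.rule = ρ → Set.InjOn lam.subst { x | x ∈ lam.rule.bodyVars })

/-- The fuelled closure approximating `DRPCset`. -/
def CC (R : Set Rule) (ρ : Rule) : ℕ → FactSet
  | 0 => ruleDB ρ ∪ Trigger.out ⟨ρ, sigmaUC⟩ 0
  | n + 1 => CC R ρ n ∪
      { f | ∃ lam : Trigger, elig R ρ lam ∧ lam.Loaded (CC R ρ n) ∧ f ∈ lam.out 0 }

lemma CC_mono {n k : ℕ} (h : n ≤ k) : CC R ρ n ⊆ CC R ρ k := by
  induction k with
  | zero =>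
    cases Nat.le_zero.1 h
    exact subset_rfl
  | succ k ih =>
    rcases Nat.le_succ_iff_eq_or_le.1 h with rfl | h'
    · exact subset_rfl
    · exact (ih h').trans (by rw [CC]; exact Set.subset_union_left)

lemma loaded_CC_iUnion {lam : Trigger} (h : lam.Loaded (⋃ n, CC R ρ n)) :
    ∃ n, lam.Loaded (CC R ρ n) := by
  have key : ∀ l : List (Atom Var), (∀ a ∈ l, a.map lam.subst ∈ ⋃ n, CC R ρ n) →
      ∃ N, ∀ a ∈ l, a.map lam.subst ∈ CC R ρ N := by
    intro l
    induction l with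
    | nil => exact fun _ => ⟨0, by simp⟩
    | cons a l ih =>
      intro hl
      rcases ih (fun b hb => hl b (by simp [hb])) with ⟨N, hN⟩
      rcases Set.mem_iUnion.1 (hl a (by simp)) with ⟨N', hN'⟩
      refine ⟨max N N', ?_⟩
      intro b hb
      rcases List.mem_cons.1 hb with rfl | hb
      · exact CC_mono (le_max_right _ _) hN'
      · exact CC_mono (le_max_left _ _) (hN b hb)
  rcases key lam.rule.body h with ⟨N, hN⟩
  exact ⟨N, hN⟩

lemma DRPCset_sub_CC : DRPCset R ρ ⊆ ⋃ n, CC R ρ n := by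
  apply Set.sInter_subset_of_mem
  refine ⟨?_, ?_, ?_⟩
  · exact (Set.subset_union_left).trans (Set.subset_iUnion (CC R ρ) 0)
  · exact (Set.subset_union_right).trans (Set.subset_iUnion (CC R ρ) 0)
  · intro lam h1 h2 h3 h4 h5 h6
    rcases loaded_CC_iUnion h4 with ⟨n, hn⟩
    refine Set.Subset.trans ?_ (Set.subset_iUnion (CC R ρ) (n + 1))
    intro f hf
    exact Or.inr ⟨lam, ⟨h1, h2, h3, h5, h6⟩, hn, hf⟩

lemma loaded_bodyGood {F : FactSet} (hg : GoodF R F) {lam : Trigger}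
    (h : lam.Loaded F) : ∀ v ∈ lam.rule.bodyVars, GoodT R (lam.subst v) := by
  intro v hv
  rcases mem_bodyVars_iff.1 hv with ⟨b, hb, hvb⟩
  exact (hg (b.map lam.subst) (h b hb)).2 (lam.subst v) (List.mem_map_of_mem hvb)

lemma loaded_frGood {F : FactSet} (hg : GoodF R F) {lam : Trigger}
    (h : lam.Loaded F) : FrGood R lam :=
  fun x hx => loaded_bodyGood hg h x (frontier_sub_bodyVars hx)

lemma CC_good (hρR : ρ ∈ R) : ∀ n, GoodF R (CC R ρ n) := by
  intro n
  induction n with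
  | zero =>
    intro a ha
    rcases ha with ⟨b, hb, rfl⟩ | ha
    · constructor
      · exact ⟨ρ, hρR, Or.inl ⟨b, hb, rfl⟩⟩
      · intro s hs
        rcases List.mem_map.1 hs with ⟨v, hv, rfl⟩
        exact GoodT.const (by simp [sigmaUC])
    · refine out_good hρR ?_ 0 a ha
      intro v hv
      exact GoodT.const (by simp [sigmaUC])
  | succ n ih =>
    intro a ha
    rcases ha with ha | ⟨lam, helig, hload, hout⟩
    · exact ih a ha
    · have : Trigger.out ⟨lam.rule, lam.subst⟩ 0 = lam.out 0 := rfl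
      refine out_good helig.1.1 ?_ 0 a (this ▸ hout)
      exact loaded_frGood ih hload

lemma branching_pos (ψ : Rule) : 0 < ψ.branching :=
  List.length_pos_iff.2 ψ.heads_ne

lemma head0_mem (ψ : Rule) : ψ.heads.getD 0 [] ∈ ψ.heads := by
  cases hh : ψ.heads with
  | nil => exact absurd hh ψ.heads_ne
  | cons x l => simp

end Closure

section Killer

variable {R : Set Rule} {ρ : Rule}

lemma mem_OsetND_of_base {lam : Trigger} {h : GTerm → GTerm} {a : Fact}
    (ha : a ∈ baseFacts R lam) : a ∈ OsetND R lam h :=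
  Set.mem_sInter.2 fun _ hF => hF.1 ha

lemma mem_OsetND_of_births {lam : Trigger} {h : GTerm → GTerm} {a : Fact}
    (ha : a ∈ lam.births) : a ∈ OsetND R lam h :=
  Set.mem_sInter.2 fun _ hF => hF.2.1 ha

/-- If the output of the base trigger coincides with the output of `lam`, then
`lam` is obsolete for its own `O`-set. -/
lemma killer (hρR : ρ ∈ R) {lam : Trigger} (hlamR : lam.rule ∈ R)
    (hdetS : lam.rule.Deterministic)
    (hout : Trigger.out ⟨ρ, sigmaUC⟩ 0 = Trigger.out lam 0) :
    lam.Obsolete (OsetND R lam (hstar lam)) := by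
  by_cases hallc : ∀ x ∈ lam.rule.frontierList, ∃ c, lam.subst x = GTerm.const c
  · -- all frontier values are constants: use the star substitution
    refine ⟨lam.rule.heads.getD 0 [], head0_mem _, 
      fun y => if y ∈ lam.rule.bodyVars then lam.subst y else GTerm.const Const.star,
      fun x hx => if_pos hx, ?_⟩
    intro a ha
    apply mem_OsetND_of_base
    constructor
    · exact ⟨lam.rule, hlamR, Or.inr ⟨_, head0_mem _, a, ha, rfl⟩⟩
    · intro t ht
      rcases List.mem_map.1 ht with ⟨v, hv, rfl⟩
      by_cases hb : v ∈ lam.rule.bodyVars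
      · rw [if_pos hb]
        have hvfr := head_var_mem_frontier ha hv hb
        rcases hallc v hvfr with ⟨c, hc⟩
        refine ⟨c, hc, Or.inl ?_⟩
        refine ⟨lam.subst v, Or.inr ⟨v, hvfr, rfl, c, hc⟩, ?_⟩
        rw [hc]
        exact GTerm.Subterm.refl _
      · rw [if_neg hb]
        exact ⟨Const.star, rfl, Or.inr rfl⟩
  · -- some frontier value is functional: own output is contained in the births
    push_neg at hallc
    rcases hallc with ⟨x0, hx0, hnc⟩
    rcases det_frontier_head0 hdetS hx0 with ⟨a0, ha0, hx0a⟩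
    have hfact : (a0.map (skolemSubst lam.rule 0 lam.subst)) ∈ Trigger.out lam 0 :=
      ⟨a0, ha0, rfl⟩
    rw [← hout] at hfact
    rcases hfact with ⟨a', ha', heq⟩
    have hlen : a0.args.length = a'.args.length := by
      have := congrArg (fun z => z.args.length) heq
      simpa [Atom.map] using this
    rcases List.mem_iff_getElem.1 hx0a with ⟨p, hp, hx0p⟩
    have hargs := congrArg Atom.args heq
    simp only [Atom.map] at hargs
    have hval : skolemSubst lam.rule 0 lam.subst (a0.args[p]) =
        skolemSubst ρ 0 sigmaUC (a'.args[p]'(by omega)) := by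
      have h2 := congrArg (fun l => l[p]?) hargs
      simp only [List.getElem?_map] at h2
      rw [List.getElem?_eq_getElem hp,
        List.getElem?_eq_getElem (show p < a'.args.length by omega)] at h2
      simpa using h2
    rw [hx0p, skolemSubst_of_mem (frontier_sub_bodyVars hx0)] at hval
    set v' := a'.args[p]'(by omega) with hv'
    by_cases hb' : v' ∈ ρ.bodyVars
    · rw [skolemSubst_of_mem hb'] at hval
      exact absurd hval (hnc _)
    · rw [skolemSubst_of_not_mem hb'] at hval
      -- lam.out 0 ⊆ lam.births
      have houtsub : Trigger.out lam 0 ⊆ lam.births := by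
        intro f hf
        refine ⟨x0, hx0, ?_⟩
        rw [hval]
        apply mem_births_func.2
        apply Or.inl
        have : Trigger.out ⟨ρ, frontierSubst ρ (ρ.frontierList.map sigmaUC)⟩ 0 =
            Trigger.out ⟨ρ, sigmaUC⟩ 0 :=
          out_congr_frontier (fun x hx => frontierSubst_map ρ sigmaUC hx) 0
        rw [this, hout]
        exact hf
      refine ⟨lam.rule.heads.getD 0 [], head0_mem _, skolemSubst lam.rule 0 lam.subst,
        fun x hx => skolemSubst_of_mem hx, ?_⟩
      intro a ha
      exact mem_OsetND_of_births (houtsub ⟨a, ha, rfl⟩)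

end Killer

section Beta

variable {R : Set Rule} {ρ : Rule}

lemma collapse_out_fact {lamS : Trigger} (hfrS : FrGood R lamS) (ψ : Rule) (τ : Subst)
    {a : Atom Var} :
    Atom.map (hstar lamS) (a.map (skolemSubst ψ 0 τ)) =
      Atom.map (hstar lamS) (a.map (skolemSubst ψ 0 (fun x => hstar lamS (τ x)))) := by
  rw [Atom.map_map, Atom.map_map]
  unfold Atom.map
  simp only [Atom.mk.injEq, true_and]
  apply List.map_congr_left
  intro v _
  exact hstar_skolem hfrS ψ 0 τ v

lemma collapse_out_mem {lamS : Trigger} (hfrS : FrGood R lamS) {ψ : Rule} {τ : Subst}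
    {f : Fact} (hf : f ∈ Trigger.out ⟨ψ, τ⟩ 0) :
    Atom.map (hstar lamS) f ∈
      hImg (hstar lamS) (Trigger.outUnion ⟨ψ, fun x => hstar lamS (τ x)⟩) := by
  rcases hf with ⟨a, ha, rfl⟩
  refine ⟨a.map (skolemSubst ψ 0 (fun x => hstar lamS (τ x))), ?_, ?_⟩
  · exact ⟨0, branching_pos ψ, a, ha, rfl⟩
  · exact (collapse_out_fact hfrS ψ τ).symm

lemma hstar_const_case (lamS : Trigger) (d : Const) :
    ∃ c, hstar lamS (GTerm.const d) = GTerm.const c ∧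
      (c ∈ skelConsts lamS ∨ c = Const.star) := by
  by_cases h : GTerm.const d ∈ skel lamS
  · exact ⟨d, hstar_of_mem h, Or.inl ⟨GTerm.const d, h, GTerm.Subterm.refl _⟩⟩
  · exact ⟨Const.star, hstar_of_not_mem h, Or.inr rfl⟩

/-- Main collapse lemma: up to level `m`, the closure collapses into any
`O`-closed set for the chosen trigger. -/
lemma beta (hρR : ρ ∈ R) (hdet : ρ.Deterministic) (m : ℕ) {lamS : Trigger}
    (heligS : elig R ρ lamS) (hloadS : lamS.Loaded (CC R ρ m))
    (hnd : ¬ lamS.rule.Datalog)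
    (hmin : ∀ k < m, ∀ lam : Trigger, elig R ρ lam → lam.Loaded (CC R ρ k) →
      lam.rule.Datalog)
    (hnotobs : ¬ lamS.Obsolete (OsetND R lamS (hstar lamS)))
    {F : FactSet} (hF : OclosedND R lamS (hstar lamS) F) :
    ∀ n, n ≤ m → ∀ a ∈ CC R ρ n, Atom.map (hstar lamS) a ∈ F := by
  have hfrS : FrGood R lamS := loaded_frGood (CC_good hρR m) hloadS
  -- the collapsed database facts are base facts
  have hbase : ∀ b ∈ ρ.body, Atom.map (hstar lamS) (b.map sigmaUC) ∈ F := by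
    intro b hb
    apply hF.1
    constructor
    · exact ⟨ρ, hρR, Or.inl ⟨b, hb, rfl⟩⟩
    · intro t ht
      rw [Atom.map_map] at ht
      rcases List.mem_map.1 ht with ⟨v, hv, rfl⟩
      exact hstar_const_case lamS (Const.varConst v)
  intro n
  induction n with
  | zero =>
    intro _ a ha
    rcases ha with ⟨b, hb, rfl⟩ | ha
    · exact hbase b hb
    · -- output of the base trigger
      set lam0' : Trigger := ⟨ρ, fun x => hstar lamS (sigmaUC x)⟩ with hlam0'
      by_cases hcav : lam0'.out 0 = lamS.out 0
      · exfalso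
        apply hnotobs
        -- hstar fixes the frontier constants
        have hfix : ∀ x ∈ ρ.frontierList, hstar lamS (sigmaUC x) = sigmaUC x := by
          intro x hx
          by_contra hne
          have hns : sigmaUC x ∉ skel lamS := fun hmem => hne (hstar_of_mem hmem)
          rcases det_frontier_head0 hdet hx with ⟨a0, ha0, hxa0⟩
          have hfact : a0.map (skolemSubst ρ 0 (fun x => hstar lamS (sigmaUC x))) ∈
              lamS.out 0 := by
            rw [← hcav]
            exact ⟨a0, ha0, rfl⟩
          have hsf := star_free_out (ψ := lamS.rule) (τ := lamS.subst) hfrS hfact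
          apply hsf (skolemSubst ρ 0 (fun x => hstar lamS (sigmaUC x)) x)
            (List.mem_map_of_mem hxa0)
          rw [skolemSubst_of_mem (frontier_sub_bodyVars hx), hstar_of_not_mem hns]
          exact GTerm.Subterm.refl _
        have : Trigger.out ⟨ρ, sigmaUC⟩ 0 = lamS.out 0 := by
          rw [← hcav, hlam0']
          exact (out_congr_frontier hfix 0).symm
        exact killer hρR heligS.1.1 heligS.2.1 this
      · have hsub := hF.2.2 lam0'
          ⟨hρR, fun x => hstar_over (GTerm.Over.const _)⟩
          (fun b hb => by
            have := hbase b hb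
            rwa [Atom.map_map] at this)
          (fun _ => ⟨0, by
            have h1 := branching_pos lamS.rule
            omega, hcav⟩)
        rcases ha with ⟨a, ha', rfl⟩
        have := collapse_out_mem hfrS (ψ := ρ) (τ := sigmaUC) ⟨a, ha', rfl⟩
        exact hsub this
  | succ k ih =>
    intro hk a ha
    rcases ha with ha | ⟨lam, helig, hload, hout⟩
    · exact ih (by omega) a ha
    · have hdl : lam.rule.Datalog := hmin k (by omega) lam helig hload
      set lam'' : Trigger := ⟨lam.rule, fun x => hstar lamS (lam.subst x)⟩ with hlam''
      have hsub := hF.2.2 lam''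
        ⟨helig.1.1, fun x => hstar_over (helig.1.2 x)⟩
        (fun b hb => by
          have := ih (by omega) (b.map lam.subst) (hload b hb)
          rwa [Atom.map_map] at this)
        (fun h => absurd (h ▸ hdl) hnd)
      have hout' : a ∈ Trigger.out ⟨lam.rule, lam.subst⟩ 0 := hout
      have := collapse_out_mem hfrS hout'
      exact hsub this

end Beta

section Extraction

variable {R : Set Rule} {ρ : Rule}

/-- Occurrence of a cyclic term forces a non-datalog eligible trigger. -/
lemma exists_nondatalog {t0 : GTerm} (hcyc : RuleCyclic ρ t0)
    (hocc : t0.OccursIn (⋃ n, CC R ρ n)) :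
    ∃ n lam, elig R ρ lam ∧ lam.Loaded (CC R ρ n) ∧ ¬ lam.rule.Datalog := by
  rcases hcyc with ⟨i0, y0, args0, rfl, s0, hs0, args0', hsub0⟩
  set t0 : GTerm := GTerm.func ρ i0 y0 args0 with ht0
  have hP : ∃ n, ∃ a ∈ CC R ρ n, ∃ s ∈ a.args, t0.Subterm s := by
    rcases hocc with ⟨a, ha, s, hs, hsub⟩
    rcases Set.mem_iUnion.1 ha with ⟨n, hn⟩
    exact ⟨n, a, hn, s, hs, hsub⟩
  classical
  let n0 := Nat.find hP
  have hn0 := Nat.find_spec hP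
  rcases hn0 with ⟨a, ha, s, hs, hsub⟩
  -- t0 cannot be a subterm of a constant
  have hnc : ∀ (c : Const), ¬ t0.Subterm (GTerm.const c) := by
    intro c h
    rw [ht0] at h
    cases h.eq_of_const
  -- helper: t0 cannot occur in the output of the base trigger
  have hbase : ∀ f ∈ Trigger.out ⟨ρ, sigmaUC⟩ 0, ∀ s ∈ f.args, ¬ t0.Subterm s := by
    rintro f ⟨at', hat', rfl⟩ s hsf hsub'
    rcases List.mem_map.1 hsf with ⟨v, hv, rfl⟩
    by_cases hb : v ∈ ρ.bodyVars
    · rw [skolemSubst_of_mem hb] at hsub'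
      exact hnc _ hsub'
    · rw [skolemSubst_of_not_mem hb] at hsub'
      rcases hsub'.of_func with heq | ⟨u, hu, hsu⟩
      · rw [ht0] at heq
        rw [GTerm.func.injEq] at heq
        obtain ⟨-, -, -, rfl⟩ := heq
        rcases List.mem_map.1 hs0 with ⟨x, hx, hxeq⟩
        rw [← hxeq] at hsub0
        cases hsub0.eq_of_const
      · rcases List.mem_map.1 hu with ⟨x, hx, rfl⟩
        exact hnc _ hsu
  cases hn0eq : n0 with
  | zero =>
    exfalso
    rw [show Nat.find hP = n0 from rfl, hn0eq] at ha
    rcases ha with ⟨b, hb, rfl⟩ | ha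
    · rcases List.mem_map.1 hs with ⟨v, hv, rfl⟩
      exact hnc _ hsub
    · exact hbase a ha s hs hsub
  | succ k =>
    rw [show Nat.find hP = n0 from rfl, hn0eq] at ha
    have hnotk : ¬ ∃ a ∈ CC R ρ k, ∃ s ∈ a.args, t0.Subterm s := by
      have := Nat.find_min hP (show k < Nat.find hP by rw [show Nat.find hP = n0 from rfl, hn0eq]; omega)
      simpa using this
    rcases ha with ha | ⟨lam, helig, hload, hout⟩
    · exact absurd ⟨a, ha, s, hs, hsub⟩ hnotk
    · rcases hout with ⟨at', hat', rfl⟩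
      rcases List.mem_map.1 hs with ⟨v, hv, rfl⟩
      by_cases hb : v ∈ lam.rule.bodyVars
      · exfalso
        rw [skolemSubst_of_mem hb] at hsub
        rcases mem_bodyVars_iff.1 hb with ⟨b, hbb, hvb⟩
        exact hnotk ⟨b.map lam.subst, hload b hbb, lam.subst v,
          List.mem_map_of_mem hvb, hsub⟩
      · rw [skolemSubst_of_not_mem hb] at hsub
        rcases hsub.of_func with heq | ⟨u, hu, hsu⟩
        · -- t0 is the newly created term; its rule is lam.rule and v is existential
          refine ⟨k, lam, helig, hload, ?_⟩
          intro hdl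
          rw [ht0] at heq
          rw [GTerm.func.injEq] at heq
          obtain ⟨hrule, -, rfl, -⟩ := heq
          have hheads : lam.rule.heads.getD 0 [] ∈ lam.rule.heads := head0_mem _
          exact hb (hdl.2 _ hheads at' hat' _ hv)
        · exfalso
          rcases List.mem_map.1 hu with ⟨x, hx, rfl⟩
          rcases mem_bodyVars_iff.1 (frontier_sub_bodyVars hx) with ⟨b, hbb, hvb⟩
          exact hnotk ⟨b.map lam.subst, hload b hbb, lam.subst x,
            List.mem_map_of_mem hvb, hsu⟩

end Extraction

section ChaseTreeFacts

variable {R : Set Rule} {D : FactSet}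

lemma out_finite (lam : Trigger) (i : ℕ) : (lam.out i).Finite := by
  have : lam.out i = (fun a => a.map (skolemSubst lam.rule i lam.subst)) ''
      { a | a ∈ lam.rule.heads.getD i [] } := by
    ext f
    simp only [Trigger.out, Set.mem_setOf_eq, Set.mem_image]
    constructor
    · rintro ⟨a, ha, rfl⟩; exact ⟨a, ha, rfl⟩
    · rintro ⟨a, ha, rfl⟩; exact ⟨a, ha, rfl⟩
  rw [this]
  exact ((lam.rule.heads.getD i []).finite_toSet).image _

lemma exists_leaf (T : ChaseTree R D) (hfin : Finite T.V) :
    ∃ v : T.V, ∀ c, ¬ T.E v c := by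
  by_contra hno
  push_neg at hno
  choose g hg using hno
  let f : ℕ → T.V := fun n => Nat.rec T.root (fun _ v => g v) n
  have hstep : ∀ n, T.E (f n) (f (n + 1)) := fun n => hg (f n)
  have hne : ∀ i j, i < j → f i ≠ f j := by
    intro i
    induction i with
    | zero =>
      intro j hj heq
      rcases Nat.exists_eq_succ_of_ne_zero (by omega : j ≠ 0) with ⟨jj, rfl⟩
      have h2 := hstep jj
      rw [← heq] at h2
      exact T.no_in_root (f jj) h2
    | succ i ih =>
      intro j hj heq
      rcases Nat.exists_eq_succ_of_ne_zero (by omega : j ≠ 0) with ⟨jj, rfl⟩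
      have h2 := hstep jj
      rw [← heq] at h2
      exact ih jj (by omega) (T.parent_unique (hstep i) h2)
  have : Function.Injective f := by
    intro i j h
    rcases lt_trichotomy i j with hlt | rfl | hlt
    · exact absurd h (hne i j hlt)
    · rfl
    · exact absurd h.symm (hne j i hlt)
  have := Infinite.of_injective f this
  exact not_finite T.V

lemma path_facts (T : ChaseTree R D) :
    ∀ v : T.V, Relation.ReflTransGen T.E T.root v →
      D ⊆ T.fl v ∧ ∃ X : FactSet, X.Finite ∧ T.fl v = D ∪ X := by
  intro v hv
  induction hv with
  | refl =>
    rw [T.root_label]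
    exact ⟨subset_rfl, ∅, Set.finite_empty, by simp⟩
  | tail hrt he ih =>
    rename_i b c
    rcases ih with ⟨hD, X, hXfin, hXeq⟩
    rcases T.expand b ⟨c, he⟩ with ⟨lam, -, -, -, -, ff, -, -, hall, hlbl⟩
    rcases hall c he with ⟨i, rfl⟩
    have h1 := (hlbl i).1
    constructor
    · rw [h1]; exact hD.trans Set.subset_union_left
    · refine ⟨X ∪ lam.out i.1, hXfin.union (out_finite lam i.1), ?_⟩
      rw [h1, hXeq, Set.union_assoc]

end ChaseTreeFacts

section EncodedDB

/-- A constant bound for natural constants occurring in a term. -/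
def cb : GTerm → ℕ
  | .const (Const.nat n) => n
  | .const _ => 0
  | .func _ _ _ args => (args.attach.map fun s => cb s.1).foldr max 0
termination_by t => sizeOf t
decreasing_by
  have := List.sizeOf_lt_of_mem s.2
  simp only [GTerm.func.sizeOf_spec]
  omega

lemma cb_bound {n : ℕ} {t : GTerm} (h : (GTerm.const (Const.nat n)).Subterm t) :
    n ≤ cb t := by
  induction h with
  | refl => simp [cb]
  | func ρ i y hmem hsub ih =>
    rename_i s args
    have hcb : cb (GTerm.func ρ i y args) = (args.map cb).foldr max 0 := by
      rw [cb, List.attach_map_val]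
    rw [hcb]
    exact le_trans ih (le_foldr_max _ (List.mem_map_of_mem (f := cb) hmem))

def encT (k : ℕ) (t : GTerm) : GTerm :=
  GTerm.const (Const.nat (Nat.pair k (gcode t)))

lemma encT_inj (k : ℕ) : Function.Injective (encT k) := by
  intro a b h
  simp only [encT, GTerm.const.injEq, Const.nat.injEq] at h
  exact gcode_inj (pair_inj h).2

instance : Nonempty GTerm := ⟨GTerm.const Const.star⟩

noncomputable def decT (k : ℕ) : GTerm → GTerm := fun t =>
  match t with
  | .const (Const.nat n) =>
      if n.unpair.1 = k then Function.invFun gcode n.unpair.2 else GTerm.const Const.star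
  | _ => GTerm.const Const.star

lemma decT_encT (k : ℕ) (t : GTerm) : decT k (encT k t) = t := by
  simp only [decT, encT, Nat.unpair_pair, if_pos rfl]
  exact Function.leftInverse_invFun gcode_inj t

def MentionsK (a : Fact) (k : ℕ) : Prop :=
  ∃ s ∈ a.args, ∃ n : ℕ, (GTerm.const (Const.nat n)).Subterm s ∧ n.unpair.1 = k

lemma clean_exists {X : FactSet} (hX : X.Finite) :
    ∃ k : ℕ, ∀ a ∈ X, ¬ MentionsK a k := by
  have hsub : { k | ∃ a ∈ X, MentionsK a k } ⊆
      ⋃ a ∈ X, Set.Iic ((a.args.map cb).foldr max 0) := by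
    rintro k ⟨a, ha, s, hs, n, hsub, hk⟩
    refine Set.mem_biUnion ha ?_
    have h1 : n ≤ cb s := cb_bound hsub
    have h2 : cb s ≤ (a.args.map cb).foldr max 0 :=
      le_foldr_max _ (List.mem_map_of_mem (f := cb) hs)
    have h3 : k ≤ n := hk ▸ Nat.unpair_left_le n
    exact Set.mem_Iic.2 (by omega)
  have hfin : { k | ∃ a ∈ X, MentionsK a k }.Finite :=
    Set.Finite.subset (hX.biUnion (fun a _ => Set.finite_Iic _)) hsub
  rcases (hfin.infinite_compl).nonempty with ⟨k, hk⟩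
  refine ⟨k, ?_⟩
  intro a ha hm
  exact hk ⟨a, ha, hm⟩

end EncodedDB


/-- Theorem: if a rule set is DRPC, then it never-terminates. -/
theorem drpc_never_terminates (R : Set Rule) : IsDRPC R → NeverTerminates R := by
  rintro ⟨ρ, hρR, hdet, t0, hcyc, hocc⟩
  classical
  have hocc' : t0.OccursIn (⋃ n, CC R ρ n) := by
    rcases hocc with ⟨a, ha, s, hs, hsub⟩
    exact ⟨a, DRPCset_sub_CC ha, s, hs, hsub⟩
  have hS : ∃ n, ∃ lam : Trigger, elig R ρ lam ∧ lam.Loaded (CC R ρ n) ∧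
      ¬ lam.rule.Datalog := by
    rcases exists_nondatalog hcyc hocc' with ⟨n1, lam1, h1, h2, h3⟩
    exact ⟨n1, lam1, h1, h2, h3⟩
  obtain ⟨lamS, heligS, hloadS, hndS⟩ := Nat.find_spec hS
  have hmin : ∀ k < Nat.find hS, ∀ lam : Trigger, elig R ρ lam →
      lam.Loaded (CC R ρ k) → lam.rule.Datalog := by
    intro k hk lam he hl
    by_contra hnd
    exact Nat.find_min hS hk ⟨lam, he, hl, hnd⟩
  have hnotobs : ¬ lamS.Obsolete (OsetND R lamS (hstar lamS)) := by
    rcases heligS.2.2.2.1 with hdl | hno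
    · exact absurd hdl hndS
    · exact hno
  have hgood : GoodF R (CC R ρ (Nat.find hS)) := CC_good hρR _
  have hfrS : FrGood R lamS := loaded_frGood hgood hloadS
  refine ⟨⋃ k : ℕ, (Atom.map (encT k)) '' CC R ρ (Nat.find hS), ?_, ?_⟩
  · -- the database is function-free
    rintro a ha t ht
    rcases Set.mem_iUnion.1 ha with ⟨k, hk⟩
    rcases hk with ⟨b, hb, rfl⟩
    rcases List.mem_map.1 ht with ⟨s, hs, rfl⟩
    exact ⟨_, rfl⟩
  · rintro ⟨T, hfin⟩
    obtain ⟨u, hleaf⟩ := exists_leaf T hfin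
    obtain ⟨hDsub, X, hXfin, hXeq⟩ := path_facts T u (T.reach_root u)
    obtain ⟨k, hclean⟩ := clean_exists hXfin
    have hloadBar : Trigger.Loaded ⟨lamS.rule, fun x => encT k (lamS.subst x)⟩ (T.fl u) := by
      intro b hb
      apply hDsub
      apply Set.mem_iUnion.2
      refine ⟨k, b.map lamS.subst, hloadS b hb, ?_⟩
      rw [Atom.map_map]
    have hsat := T.leaf_sat u hleaf lamS.rule heligS.1.1
      (fun x => encT k (lamS.subst x)) hloadBar
    rcases hsat with ⟨h, hh, σb, hagree, hwit⟩
    apply hnotobs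
    refine ⟨h, hh, fun y => if y ∈ lamS.rule.bodyVars then lamS.subst y
      else hstar lamS (decT k (σb y)), fun x hx => if_pos hx, ?_⟩
    intro a ha
    by_cases hma : MentionsK (a.map σb) k
    · -- the witness fact mentions the clean copy: it is an encoded closure fact
      have hmem : a.map σb ∈ T.fl u := hwit a ha
      rw [hXeq] at hmem
      rcases hmem with hmem | hmem
      · rcases Set.mem_iUnion.1 hmem with ⟨j, hmem'⟩
        rcases hmem' with ⟨b, hbG, hbe⟩
        have hjk : j = k := by
          rcases hma with ⟨s, hs, n, hsubn, hnk⟩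
          rw [← hbe] at hs
          rcases List.mem_map.1 hs with ⟨t', ht', rfl⟩
          have heqc := hsubn.eq_of_const
          simp only [encT, GTerm.const.injEq, Const.nat.injEq] at heqc
          rw [heqc, Nat.unpair_pair] at hnk
          exact hnk
        rw [hjk] at hbe
        have hargs : a.args.map σb = b.args.map (encT k) := by
          have := congrArg Atom.args hbe
          simp only [Atom.map] at this
          exact this.symm
        have hlen : a.args.length = b.args.length := by
          have := congrArg List.length hargs
          simpa using this
        have hpred : a.pred = b.pred := by
          have := congrArg Atom.pred hbe
          simp only [Atom.map] at this
          exact this.symm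
        have hkey : a.args.map (fun y => if y ∈ lamS.rule.bodyVars then lamS.subst y
            else hstar lamS (decT k (σb y))) = b.args.map (hstar lamS) := by
          apply List.ext_getElem (by simpa using hlen)
          intro p hp hp2
          simp only [List.length_map] at hp hp2
          rw [List.getElem_map, List.getElem_map]
          have hpv : σb (a.args[p]) = encT k (b.args[p]) := by
            have h2 := congrArg (fun l => l[p]?) hargs
            simp only [List.getElem?_map] at h2
            rw [List.getElem?_eq_getElem hp, List.getElem?_eq_getElem hp2] at h2
            simpa using h2
          by_cases hb : a.args[p] ∈ lamS.rule.bodyVars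
          · rw [if_pos hb]
            have h1 : σb (a.args[p]) = encT k (lamS.subst (a.args[p])) := hagree _ hb
            have h2 : b.args[p] = lamS.subst (a.args[p]) := encT_inj k (by rw [← hpv, h1])
            rw [h2]
            have hfr : a.args[p] ∈ lamS.rule.frontierList :=
              mem_frontier_of hb hh ha (List.getElem_mem hp)
            rw [hstar_of_mem (frontier_val_in_skel hfrS hfr)]
          · rw [if_neg hb, hpv, decT_encT]
        have heqatom : Atom.map (fun y => if y ∈ lamS.rule.bodyVars then lamS.subst y
            else hstar lamS (decT k (σb y))) a = Atom.map (hstar lamS) b := by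
          unfold Atom.map
          simp only [Atom.mk.injEq]
          exact ⟨hpred, hkey⟩
        rw [show (a.map (fun y => if y ∈ lamS.rule.bodyVars then lamS.subst y
            else hstar lamS (decT k (σb y)))) = Atom.map (hstar lamS) b from heqatom]
        apply Set.mem_sInter.2
        intro F hF
        exact beta hρR hdet (Nat.find hS) heligS hloadS hndS hmin hnotobs hF _ le_rfl b hbG
      · exact absurd hma (hclean _ hmem)
    · -- the witness fact avoids the clean copy entirely: its image is a base fact
      apply mem_OsetND_of_base
      constructor
      · exact ⟨lamS.rule, heligS.1.1, Or.inr ⟨h, hh, a, ha, rfl⟩⟩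
      · intro t ht
        rcases List.mem_map.1 ht with ⟨v, hv, rfl⟩
        have hvnb : v ∉ lamS.rule.bodyVars := by
          intro hb
          apply hma
          refine ⟨σb v, List.mem_map_of_mem hv,
            Nat.pair k (gcode (lamS.subst v)), ?_, ?_⟩
          · rw [hagree v hb]
            exact GTerm.Subterm.refl _
          · rw [Nat.unpair_pair]
        rw [if_neg hvnb]
        have hdec : decT k (σb v) = GTerm.const Const.star := by
          cases hsb : σb v with
          | func _ _ _ _ => simp [decT]
          | const c =>
            cases c with
            | nat n =>
              by_cases hnk : n.unpair.1 = k
              · exfalso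
                apply hma
                refine ⟨σb v, List.mem_map_of_mem hv, n, ?_, hnk⟩
                rw [hsb]
                exact GTerm.Subterm.refl _
              · simp [decT, hnk]
            | star => simp [decT]
            | skolemConst _ _ _ => simp [decT]
            | varConst _ => simp [decT]
        rw [hdec, hstar_star]
        exact ⟨Const.star, rfl, Or.inr rfl⟩


end
end DisjChase
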